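/- Let ρ be a positively homogeneous monetary risk measure on 𝒳 such that ρ(𝟙_A) = 0 for every event A ∈ 𝓕 with ℙ(A) < 1. Then ρ equals the worst-case risk measure: ρ(X) = ρ^w(X) = ess sup(−X) for all X ∈ 𝒳. -/

import Mathlib

/-!
Write `M = ess sup (-X)`. Since `X ≥ -M` a.s., monotonicity and cash-additivity give
`ρ(X) ≤ ρ(0) + M`, and `ρ(0) = 0` by homogeneity. Conversely, for `m < M` the event `{X < -m}`
has positive probability, so `A = {X ≥ -m}` has `P(A) < 1`, and `X ≤ t 𝟙_A - m` as soon as `t`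
exceeds `ess sup X + m`. Homogeneity and `ρ(𝟙_A) = 0` give `ρ(t 𝟙_A - m) = m`, hence `ρ(X) ≥ m`.
-/

open MeasureTheory Filter Set

noncomputable section

namespace Paper

variable {Ω : Type*} [MeasurableSpace Ω]

/-- The probability measure `P` is atomless. -/
def Atomless (P : Measure Ω) : Prop :=
  ∀ s : Set Ω, MeasurableSet s → 0 < P s →
    ∃ t : Set Ω, MeasurableSet t ∧ t ⊆ s ∧ 0 < P t ∧ P t < P s

/-- `𝒳`: the essentially bounded random variables. -/
def MemX (P : Measure Ω) (X : Ω → ℝ) : Prop :=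
  Measurable X ∧ ∃ C : ℝ, ∀ᵐ ω ∂P, |X ω| ≤ C

/-- `𝒰(I)`: twice differentiable functions with everywhere positive first
derivative on `I`. -/
def IsUtility (I : Set ℝ) (u : ℝ → ℝ) : Prop :=
  (∀ x ∈ I, DifferentiableAt ℝ u x) ∧
  (∀ x ∈ I, DifferentiableAt ℝ (deriv u) x) ∧
  (∀ x ∈ I, 0 < deriv u x)

/-- Arrow–Pratt coefficient of absolute risk aversion. -/
def RA (u : ℝ → ℝ) (x : ℝ) : ℝ := -deriv (deriv u) x / deriv u x

/-- `𝓛¹_v`: `I`-valued random variables `X` with `v(X)` integrable. -/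
def MemL1 (P : Measure Ω) (I : Set ℝ) (v : ℝ → ℝ) (X : Ω → ℝ) : Prop :=
  Measurable X ∧ (∀ᵐ ω ∂P, X ω ∈ I) ∧ Integrable (fun ω => v (X ω)) P

/-- The `v`-SD order: `X ≤_{v-SD} Y`. -/
def vSD (P : Measure Ω) (I : Set ℝ) (v : ℝ → ℝ) (X Y : Ω → ℝ) : Prop :=
  ∀ u : ℝ → ℝ, IsUtility I u → (∀ x ∈ I, RA v x ≤ RA u x) →
    Integrable (fun ω => u (X ω)) P → Integrable (fun ω => u (Y ω)) P →
    ∫ ω, u (X ω) ∂P ≤ ∫ ω, u (Y ω) ∂P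

/-- Second-order stochastic dominance. -/
def SSD (P : Measure Ω) (X Y : Ω → ℝ) : Prop :=
  ∀ u : ℝ → ℝ, IsUtility Set.univ u → ConcaveOn ℝ Set.univ u →
    Integrable (fun ω => u (X ω)) P → Integrable (fun ω => u (Y ω)) P →
    ∫ ω, u (X ω) ∂P ≤ ∫ ω, u (Y ω) ∂P

/-- Monetary risk measure: antitone and cash-additive on `𝒳`. -/
def IsRiskMeasure (P : Measure Ω) (ρ : (Ω → ℝ) → ℝ) : Prop :=
  (∀ X Y : Ω → ℝ, MemX P X → MemX P Y → (∀ᵐ ω ∂P, X ω ≤ Y ω) → ρ Y ≤ ρ X) ∧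
  (∀ X : Ω → ℝ, MemX P X → ∀ c : ℝ, ρ (fun ω => X ω + c) = ρ X - c)

/-- Worst-case risk measure `ρ^w(X) = ess sup (-X)`. -/
def rhoW (P : Measure Ω) (X : Ω → ℝ) : ℝ :=
  sInf {m : ℝ | ∀ᵐ ω ∂P, -X ω ≤ m}

/-- `v`-SD-consistency of `φ` on the domain `D`. -/
def VSDConsistent (P : Measure Ω) (I : Set ℝ) (v : ℝ → ℝ)
    (D : Set (Ω → ℝ)) (φ : (Ω → ℝ) → ℝ) : Prop :=
  ∀ X Y : Ω → ℝ, X ∈ D → Y ∈ D → MemL1 P I v X → MemL1 P I v Y →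
    vSD P I v X Y → φ Y ≤ φ X

/-- `𝒞`: the a.s. strictly positive bounded random variables. -/
def MemC (P : Measure Ω) (X : Ω → ℝ) : Prop :=
  MemX P X ∧ ∀ᵐ ω ∂P, 0 < X ω

/-- `𝓔 = {e^Y : Y ∈ 𝒳}` (up to a.s. equality). -/
def MemE (P : Measure Ω) (X : Ω → ℝ) : Prop :=
  ∃ Y : Ω → ℝ, MemX P Y ∧ ∀ᵐ ω ∂P, X ω = Real.exp (Y ω)

/-- Return risk measure. -/
def IsRRM (P : Measure Ω) (η : (Ω → ℝ) → ℝ) : Prop :=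
  (∀ X : Ω → ℝ, MemC P X → 0 < η X) ∧
  (∀ X Y : Ω → ℝ, MemC P X → MemC P Y → (∀ᵐ ω ∂P, X ω ≤ Y ω) → η Y ≤ η X) ∧
  (∀ X : Ω → ℝ, MemC P X → ∀ t : ℝ, 0 < t → η (fun ω => t * X ω) = t⁻¹ * η X)

/-- Loss-based return risk measure. -/
def IsLossRRM (P : Measure Ω) (κ : (Ω → ℝ) → ℝ) : Prop :=
  (∀ L : Ω → ℝ, MemC P L → 0 < κ L) ∧
  (∀ L L' : Ω → ℝ, MemC P L → MemC P L' → (∀ᵐ ω ∂P, L' ω ≤ L ω) → κ L' ≤ κ L) ∧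
  (∀ L : Ω → ℝ, MemC P L → ∀ t : ℝ, 0 < t → κ (fun ω => t * L ω) = t * κ L)

/-- Base risk measure `ρ_{Z,v}`. -/
def baseRM (P : Measure Ω) (v : ℝ → ℝ) (Z X : Ω → ℝ) : ℝ :=
  sInf {m : ℝ | vSD P Set.univ v Z (fun ω => X ω + m)}

/-- Lower quantile function. -/
def qf (P : Measure Ω) (X : Ω → ℝ) (r : ℝ) : ℝ :=
  sInf {x : ℝ | r ≤ (P {ω | X ω ≤ x}).toReal}

/-- Expected Shortfall at level `p`. -/
def ES (P : Measure Ω) (p : ℝ) (X : Ω → ℝ) : ℝ :=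
  if p < 1 then -(1 / (1 - p)) * ∫ r in (0:ℝ)..(1 - p), qf P X r
  else rhoW P X

lemma memX_const (P : Measure Ω) (c : ℝ) : MemX P (fun _ => c) :=
  ⟨measurable_const, |c|, ae_of_all _ fun _ => le_rfl⟩

lemma memX_indicator_one (P : Measure Ω) {A : Set Ω} (hA : MeasurableSet A) :
    MemX P (A.indicator fun _ => (1 : ℝ)) :=
  ⟨measurable_const.indicator hA, 1, ae_of_all _ fun ω => by
    by_cases hω : ω ∈ A <;> simp [hω]⟩

section MemX

variable {P : Measure Ω} {X : Ω → ℝ}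

lemma MemX.const_mul (hX : MemX P X) (t : ℝ) : MemX P (fun ω => t * X ω) := by
  obtain ⟨hm, C, hC⟩ := hX
  refine ⟨hm.const_mul t, |t| * C, hC.mono fun ω h => ?_⟩
  rw [abs_mul]
  gcongr

lemma MemX.add_const (hX : MemX P X) (c : ℝ) : MemX P (fun ω => X ω + c) := by
  obtain ⟨hm, C, hC⟩ := hX
  exact ⟨hm.add_const c, C + |c|, hC.mono fun ω h => (abs_add_le _ _).trans (by gcongr)⟩

lemma rhoW_eq_essSup : rhoW P X = essSup (fun ω => -X ω) P := rfl

lemma MemX.ae_neg_le_rhoW (hX : MemX P X) : ∀ᵐ ω ∂P, -X ω ≤ rhoW P X := by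
  obtain ⟨-, C, hC⟩ := hX
  rw [rhoW_eq_essSup]
  exact ae_le_essSup (isBoundedUnder_of_eventually_le (a := C)
    (hC.mono fun ω h => (neg_le_abs _).trans h))

lemma MemX.meas_lt_pos_of_lt_rhoW [NeZero P] (hX : MemX P X) {m : ℝ} (hm : m < rhoW P X) :
    0 < P {ω | X ω < -m} := by
  obtain ⟨-, C, hC⟩ := hX
  by_contra! h
  have hle : ∀ᵐ ω ∂P, -X ω ≤ m :=
    (measure_eq_zero_iff_ae_notMem.1 (nonpos_iff_eq_zero.1 h)).mono fun ω (hω : ¬X ω < -m) => by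
      linarith [not_lt.1 hω]
  have hcobdd : IsCoboundedUnder (· ≤ ·) (ae P) (fun ω => -X ω) :=
    isCoboundedUnder_le_of_eventually_le _ (x := -C)
      (hC.mono fun ω h => by rw [abs_le] at h; linarith)
  rw [rhoW_eq_essSup] at hm
  exact hm.not_ge (essSup_le_of_ae_le m hle hcobdd)

end MemX

def IsPositivelyHomogeneous (P : Measure Ω) (ρ : (Ω → ℝ) → ℝ) : Prop :=
  ∀ X : Ω → ℝ, MemX P X → ∀ t : ℝ, 0 < t → ρ (fun ω => t * X ω) = t * ρ X

section RiskMeasure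

variable {P : Measure Ω} {ρ : (Ω → ℝ) → ℝ} {X : Ω → ℝ}

lemma IsPositivelyHomogeneous.apply_zero (hph : IsPositivelyHomogeneous P ρ) :
    ρ (fun _ => 0) = 0 := by
  have h := hph _ (memX_const P 0) 2 two_pos
  simp only [mul_zero] at h
  linarith

lemma IsRiskMeasure.apply_const (hρ : IsRiskMeasure P ρ) (c : ℝ) :
    ρ (fun _ => c) = ρ (fun _ => 0) - c := by
  simpa using hρ.2 _ (memX_const P 0) c

lemma IsRiskMeasure.apply_le_rhoW (hρ : IsRiskMeasure P ρ) (hX : MemX P X) :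
    ρ X ≤ ρ (fun _ => 0) + rhoW P X := by
  have h := hρ.1 _ X (memX_const P (-rhoW P X)) hX
    (hX.ae_neg_le_rhoW.mono fun ω h => by linarith)
  rw [hρ.apply_const] at h
  linarith

lemma IsRiskMeasure.le_apply_of_meas_lt_pos [IsProbabilityMeasure P] (hρ : IsRiskMeasure P ρ)
    (hph : IsPositivelyHomogeneous P ρ)
    (hind : ∀ A : Set Ω, MeasurableSet A → P A < 1 → ρ (A.indicator fun _ => (1 : ℝ)) = 0)
    (hX : MemX P X) {m : ℝ} (hm : 0 < P {ω | X ω < -m}) : m ≤ ρ X := by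
  obtain ⟨hXm, C, hC⟩ := hX
  have hBm : MeasurableSet {ω | X ω < -m} := measurableSet_lt hXm measurable_const
  set A := {ω | X ω < -m}ᶜ
  have hAm : MeasurableSet A := hBm.compl
  have hA : P A < 1 := by simpa using prob_compl_lt_one_sub_of_lt_prob hm hBm
  obtain ⟨t, ht, hCt⟩ : ∃ t > 0, C + m ≤ t :=
    ⟨|C| + |m| + 1, by positivity, by linarith [le_abs_self C, le_abs_self m]⟩
  have hIA := memX_indicator_one P hAm
  have hY : MemX P (fun ω => t * A.indicator (fun _ => (1 : ℝ)) ω + -m) :=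
    (hIA.const_mul t).add_const (-m)
  have hXY : ∀ᵐ ω ∂P, X ω ≤ t * A.indicator (fun _ => (1 : ℝ)) ω + -m := by
    refine hC.mono fun ω hω => ?_
    by_cases hωA : ω ∈ A
    · simp only [indicator_of_mem hωA, mul_one]
      linarith [(le_abs_self _).trans hω]
    · simp only [indicator_of_notMem hωA, mul_zero, zero_add]
      exact (not_not.1 hωA).le
  have hρY : ρ (fun ω => t * A.indicator (fun _ => (1 : ℝ)) ω + -m) = m := by
    rw [hρ.2 _ (hIA.const_mul t), hph _ hIA t ht, hind A hAm hA]
    ring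
  exact hρY ▸ hρ.1 X _ ⟨hXm, C, hC⟩ hY hXY

lemma IsRiskMeasure.rhoW_le_apply [IsProbabilityMeasure P] (hρ : IsRiskMeasure P ρ)
    (hph : IsPositivelyHomogeneous P ρ)
    (hind : ∀ A : Set Ω, MeasurableSet A → P A < 1 → ρ (A.indicator fun _ => (1 : ℝ)) = 0)
    (hX : MemX P X) : rhoW P X ≤ ρ X :=
  le_of_forall_lt_imp_le_of_dense fun _ hm =>
    hρ.le_apply_of_meas_lt_pos hph hind hX (hX.meas_lt_pos_of_lt_rhoW hm)

end RiskMeasure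

theorem statement19_general (P : Measure Ω) [IsProbabilityMeasure P]
    (ρ : (Ω → ℝ) → ℝ) (hρ : IsRiskMeasure P ρ)
    (hph : ∀ X : Ω → ℝ, MemX P X → ∀ t : ℝ, 0 < t →
      ρ (fun ω => t * X ω) = t * ρ X)
    (hind : ∀ A : Set Ω, MeasurableSet A → P A < 1 →
      ρ (A.indicator fun _ => (1 : ℝ)) = 0) :
    ∀ X : Ω → ℝ, MemX P X → ρ X = rhoW P X := by
  intro X hX
  refine le_antisymm ?_ (hρ.rhoW_le_apply hph hind hX)
  simpa only [IsPositivelyHomogeneous.apply_zero hph, zero_add] using hρ.apply_le_rhoW hX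

/-- A positively homogeneous monetary risk measure vanishing on
all indicators `𝟙_A` with `P(A) < 1` is the worst-case risk measure. -/
theorem statement19 (P : Measure Ω) [IsProbabilityMeasure P] (hP : Atomless P)
    (ρ : (Ω → ℝ) → ℝ) (hρ : IsRiskMeasure P ρ)
    (hph : ∀ X : Ω → ℝ, MemX P X → ∀ t : ℝ, 0 < t →
      ρ (fun ω => t * X ω) = t * ρ X)
    (hind : ∀ A : Set Ω, MeasurableSet A → P A < 1 →
      ρ (A.indicator fun _ => (1 : ℝ)) = 0) :
    ∀ X : Ω → ℝ, MemX P X → ρ X = rhoW P X :=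
  statement19_general P ρ hρ hph hind

end Paper
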